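/- Let M and N be real numbers with 0 < M ≤ N and N ≥ 7, and let K be a positive integer. Define R(M, N, K) := (N/M − 1)·(1 − (1 − M/N)^K). Then R(M, (7/5)·N, K) + 1/((1 − 1/N)·(1 − 5/7)) ≤ 2·R(M, N, K) + 6. -/

import Mathlib

/-!
Write `y = M / N ∈ (0, 1]`. Enlarging the library to `α N` files (`α ≥ 1`) lowers the
coded-multicast gain `1 - (1 - M / (α N))^K` below `1 - (1 - y)^K ≤ 1` and scales
`N / M - 1` to `α (N / M - 1) + (α - 1)`, so `R(M, α N, K) ≤ α R(M, N, K) + (α - 1)`.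
For `α = 7/5` this is at most `2 R(M, N, K) + 2/5`, and for `N ≥ 7` the additive term
`1 / ((1 - 1/N) (2/7))` is at most `49/12`.
-/

/-- Peak rate of the decentralized coded caching scheme. -/
noncomputable def R (M N : ℝ) (K : ℕ) : ℝ := (N / M - 1) * (1 - (1 - M / N) ^ K)

section PeakRate

variable {M N : ℝ} (K : ℕ)

lemma one_sub_one_sub_pow_nonneg {x : ℝ} (hx₀ : 0 ≤ x) (hx₁ : x ≤ 1) :
    0 ≤ 1 - (1 - x) ^ K :=
  sub_nonneg.2 (pow_le_one₀ (by linarith) (by linarith))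

lemma one_sub_one_sub_pow_le_one {x : ℝ} (hx₁ : x ≤ 1) : 1 - (1 - x) ^ K ≤ 1 :=
  sub_le_self _ (pow_nonneg (by linarith) K)

lemma one_sub_one_sub_pow_mono {x y : ℝ} (hxy : x ≤ y) (hy₁ : y ≤ 1) :
    1 - (1 - x) ^ K ≤ 1 - (1 - y) ^ K :=
  sub_le_sub_left (pow_le_pow_left₀ (by linarith) (by linarith) K) 1

lemma R_nonneg (hM : 0 < M) (hMN : M ≤ N) : 0 ≤ R M N K := by
  have hN : 0 < N := hM.trans_le hMN
  refine mul_nonneg (sub_nonneg.2 ((one_le_div hM).2 hMN)) ?_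
  exact one_sub_one_sub_pow_nonneg K (div_pos hM hN).le ((div_le_one hN).2 hMN)

lemma R_mul_le {α : ℝ} (hα : 1 ≤ α) (hM : 0 < M) (hMN : M ≤ N) :
    R M (α * N) K ≤ α * R M N K + (α - 1) := by
  have hN : 0 < N := hM.trans_le hMN
  have hy₁ : M / N ≤ 1 := (div_le_one hN).2 hMN
  have hgain : 1 - (1 - M / (α * N)) ^ K ≤ 1 - (1 - M / N) ^ K := by
    refine one_sub_one_sub_pow_mono K ?_ hy₁
    rw [mul_comm]
    exact div_le_div_of_nonneg_left hM.le hN (le_mul_of_one_le_right hN.le hα)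
  have hscale : α * N / M - 1 = α * (N / M - 1) + (α - 1) := by ring
  have hscale_nonneg : 0 ≤ α * N / M - 1 :=
    sub_nonneg.2 ((one_le_div hM).2 (hMN.trans (le_mul_of_one_le_left hN.le hα)))
  have hgain_le_one := one_sub_one_sub_pow_le_one K hy₁
  calc R M (α * N) K ≤ (α * N / M - 1) * (1 - (1 - M / N) ^ K) :=
        mul_le_mul_of_nonneg_left hgain hscale_nonneg
    _ = α * R M N K + (α - 1) * (1 - (1 - M / N) ^ K) := by rw [hscale, R]; ring
    _ ≤ α * R M N K + (α - 1) := by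
        gcongr
        exact mul_le_of_le_one_right (sub_nonneg.2 hα) hgain_le_one

end PeakRate

theorem stmt_7_general (M N : ℝ) (K : ℕ)
    (hM : 0 < M) (hMN : M ≤ N) (hN : 7 ≤ N) :
    R M ((7/5) * N) K + 1 / ((1 - 1/N) * (1 - 5/7)) ≤ 2 * R M N K + 6 := by
  have hrate := R_mul_le K (by norm_num : (1 : ℝ) ≤ 7/5) hM hMN
  have hR := R_nonneg K hM hMN
  have hden : 12 / 49 ≤ (1 - 1/N) * (1 - 5/7) := by
    have : 1 / N ≤ 1 / 7 := one_div_le_one_div_of_le (by norm_num) hN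
    nlinarith
  have hfrac : 1 / ((1 - 1/N) * (1 - 5/7)) ≤ 49 / 12 := by
    simpa using one_div_le_one_div_of_le (by norm_num) hden
  linarith

/-- Final step of the upper bound in Theorem 1, with `α = 7/5` and `N ≥ 7`:
`R(M, (7/5)·N, K) + 1/((1 − 1/N)·(1 − 5/7)) ≤ 2·R(M, N, K) + 6`. -/
theorem stmt_7 (M N : ℝ) (K : ℕ)
    (hM : 0 < M) (hMN : M ≤ N) (hN : 7 ≤ N) (hK : 0 < K) :
    R M ((7/5) * N) K + 1 / ((1 - 1/N) * (1 - 5/7)) ≤ 2 * R M N K + 6 :=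
  stmt_7_general M N K hM hMN hN
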